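/- arXiv:1605.05925 — 5 statements merged into one kernel-verified Lean document; each statement's English description precedes it below -/
import Mathlib

section
/- Let M = [[A, B], [C, D]] with D non-singular, (M/D) = A - BD⁻¹C, L : u ↦ (u, -D⁻¹Cu) and T : u ↦ (u, 0). If ker M ⊆ im T = ℝ^r × {0}, then a vector q̄ ∈ ℝ^{r+p} lies in ker M² if and only if q̄ = Lq for some q ∈ ker(M/D)². -/
theorem schur_ker_sq (r p : ℕ)
    (A : Matrix (Fin r) (Fin r) ℝ) (B : Matrix (Fin r) (Fin p) ℝ)
    (C : Matrix (Fin p) (Fin r) ℝ) (D : Matrix (Fin p) (Fin p) ℝ)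
    (hD : IsUnit D.det)
    (M : Matrix (Fin r ⊕ Fin p) (Fin r ⊕ Fin p) ℝ) (hM : M = Matrix.fromBlocks A B C D)
    (S : Matrix (Fin r) (Fin r) ℝ) (hS : S = A - B * D⁻¹ * C)
    (L : (Fin r → ℝ) → (Fin r ⊕ Fin p → ℝ))
    (hL : ∀ u, L u = Sum.elim u (-((D⁻¹ * C).mulVec u)))
    (hker : ∀ x : Fin r ⊕ Fin p → ℝ, M.mulVec x = 0 → ∀ j : Fin p, x (Sum.inr j) = 0) :
    ∀ qbar : Fin r ⊕ Fin p → ℝ,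
      (M * M).mulVec qbar = 0 ↔ ∃ q : Fin r → ℝ, (S * S).mulVec q = 0 ∧ qbar = L q := by
  have hDDi : D * D⁻¹ = 1 := Matrix.mul_nonsing_inv D hD
  have hDiD : D⁻¹ * D = 1 := Matrix.nonsing_inv_mul D hD
  have comp : ∀ (x : Fin r → ℝ) (y : Fin p → ℝ),
      M.mulVec (Sum.elim x y) = Sum.elim (A.mulVec x + B.mulVec y) (C.mulVec x + D.mulVec y) := by
    intro x y; rw [hM, Matrix.fromBlocks_mulVec]; simp
  have h1 : ∀ z, A.mulVec z + B.mulVec (-((D⁻¹ * C).mulVec z)) = S.mulVec z := by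
    intro z
    rw [Matrix.mulVec_neg, Matrix.mulVec_mulVec, hS, Matrix.sub_mulVec, Matrix.mul_assoc]
    abel
  have h2 : ∀ z, C.mulVec z + D.mulVec (-((D⁻¹ * C).mulVec z)) = 0 := by
    intro z
    rw [Matrix.mulVec_neg, Matrix.mulVec_mulVec, ← Matrix.mul_assoc, hDDi, Matrix.one_mul]
    simp
  -- M (L q) = (S q, 0)
  have key : ∀ q : Fin r → ℝ, M.mulVec (L q) = Sum.elim (S.mulVec q) 0 := by
    intro q
    rw [hL, comp, h1, h2]
  intro qbar
  constructor
  · intro h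
    rw [← Matrix.mulVec_mulVec] at h
    set u : Fin r → ℝ := qbar ∘ Sum.inl with hu
    set v : Fin p → ℝ := qbar ∘ Sum.inr with hv
    have hqbar : qbar = Sum.elim u v := by
      funext i; cases i <;> rfl
    have hlow : C.mulVec u + D.mulVec v = 0 := by
      funext j
      have := hker (M.mulVec qbar) h j
      rw [hqbar, comp] at this
      simpa using this
    have hveq : v = -((D⁻¹ * C).mulVec u) := by
      have hDv : D.mulVec v = -(C.mulVec u) := by
        rw [add_comm] at hlow
        exact eq_neg_of_add_eq_zero_left hlow
      calc v = (D⁻¹ * D).mulVec v := by rw [hDiD, Matrix.one_mulVec]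
        _ = D⁻¹.mulVec (D.mulVec v) := by rw [Matrix.mulVec_mulVec]
        _ = D⁻¹.mulVec (-(C.mulVec u)) := by rw [hDv]
        _ = -((D⁻¹ * C).mulVec u) := by rw [Matrix.mulVec_neg, Matrix.mulVec_mulVec]
    have hqL : qbar = L u := by rw [hqbar, hL, hveq]
    have hMq : M.mulVec qbar = Sum.elim (S.mulVec u) 0 := by rw [hqL, key]
    rw [hMq, comp] at h
    have hA : A.mulVec (S.mulVec u) = 0 := by
      funext i
      have := congrFun h (Sum.inl i)
      simpa using this
    have hC : C.mulVec (S.mulVec u) = 0 := by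
      funext j
      have := congrFun h (Sum.inr j)
      simpa using this
    refine ⟨u, ?_, hqL⟩
    have h3 : (D⁻¹ * C).mulVec (S.mulVec u) = 0 := by
      rw [← Matrix.mulVec_mulVec, hC, Matrix.mulVec_zero]
    rw [← Matrix.mulVec_mulVec, ← h1 (S.mulVec u), h3, hA]
    simp
  · rintro ⟨q, hq, rfl⟩
    set w : Fin r → ℝ := S.mulVec q with hw
    have hSw : S.mulVec w = 0 := by
      rw [hw, Matrix.mulVec_mulVec]; exact hq
    have hMLw : M.mulVec (L w) = 0 := by
      rw [key, hSw]; funext i; cases i <;> simp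
    have hDiCw : (D⁻¹ * C).mulVec w = 0 := by
      funext j
      have := hker (L w) hMLw j
      rw [hL] at this
      simpa using this
    have hCw : C.mulVec w = 0 := by
      have h4 := h2 w
      rw [hDiCw] at h4
      simpa using h4
    have hAw : A.mulVec w = 0 := by
      have h5 := h1 w
      rw [hDiCw, hSw] at h5
      simpa using h5
    rw [← Matrix.mulVec_mulVec, key, ← hw, comp]
    funext i
    cases i <;> simp [hAw, hCw]
end

section
/- Let H : ℝ^m → ℝ^{n×n} be a C¹ matrix-valued map, x* a point with rank H(x*) = n - 1, and p a nonzero vector in ker H(x*). Then for any q ∈ ℝ^m, the directional derivative matrix (H'(x*)q) applied to p does not lie in im H(x*) if and only if the directional derivative of det H at x* in the direction q is nonzero, i.e. (det H)'(x*)q ≠ 0. -/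
open Matrix Finset in
lemma alg_sum_det (n : ℕ) (A D : Matrix (Fin n) (Fin n) ℝ) :
    ∑ σ : Equiv.Perm (Fin n), (Equiv.Perm.sign σ : ℝ) *
        ∑ i, (∏ j ∈ Finset.univ.erase i, A (σ j) j) * D (σ i) i =
      ∑ i, (A.updateCol i (fun k => D k i)).det := by
  simp_rw [Finset.mul_sum]
  rw [Finset.sum_comm]
  refine Finset.sum_congr rfl fun i _ => ?_
  rw [Matrix.det_apply']
  refine Finset.sum_congr rfl fun σ _ => ?_
  rw [← Finset.mul_prod_erase Finset.univ _ (Finset.mem_univ i)]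
  rw [Matrix.updateCol_self]
  have : ∀ j ∈ Finset.univ.erase i, (A.updateCol i fun k => D k i) (σ j) j = A (σ j) j := by
    intro j hj
    rw [Matrix.updateCol_ne (Finset.ne_of_mem_erase hj)]
  rw [Finset.prod_congr rfl this]
  ring

open Matrix Finset

lemma det_fderiv_eq (m n : ℕ) (H : (Fin m → ℝ) → Matrix (Fin n) (Fin n) ℝ)
    (hH : ∀ i j, ContDiff ℝ 1 (fun x => H x i j)) (xs : Fin m → ℝ) (q : Fin m → ℝ) :
    fderiv ℝ (fun x => (H x).det) xs q =
      ∑ i, ((H xs).updateCol i (fun k => fderiv ℝ (fun x => H x k i) xs q)).det := by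
  have hd : ∀ i j, HasFDerivAt (fun x => H x i j) (fderiv ℝ (fun x => H x i j) xs) xs :=
    fun i j => (((hH i j).differentiable one_ne_zero) xs).hasFDerivAt
  have hmain : HasFDerivAt (fun x => (H x).det)
      (∑ σ : Equiv.Perm (Fin n), (Equiv.Perm.sign σ : ℝ) •
        ∑ i, (∏ j ∈ Finset.univ.erase i, H xs (σ j) j) •
          fderiv ℝ (fun x => H x (σ i) i) xs) xs := by
    have : ∀ x, (H x).det = ∑ σ : Equiv.Perm (Fin n),
        (Equiv.Perm.sign σ : ℝ) * ∏ i, H x (σ i) i := fun x => Matrix.det_apply' (H x)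
    simp_rw [this]
    exact HasFDerivAt.fun_sum fun (σ : Equiv.Perm (Fin n)) _ =>
      (HasFDerivAt.finset_prod (fun i _ => hd (σ i) i)).const_mul _
  rw [hmain.fderiv]
  have := alg_sum_det n (H xs) (Matrix.of fun i j => fderiv ℝ (fun x => H x i j) xs q)
  simp only [ContinuousLinearMap.coe_sum', Finset.sum_apply, ContinuousLinearMap.coe_smul',
    Pi.smul_apply, smul_eq_mul]
  simpa using this

open Matrix Finset

lemma adjugate_ne_zero_of_rank (n : ℕ) (hn : 1 ≤ n) (A : Matrix (Fin n) (Fin n) ℝ)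
    (h : A.rank = n - 1) : A.adjugate ≠ 0 := by
  classical
  set W : Submodule ℝ (Fin n → ℝ) := Submodule.span ℝ (Set.range A) with hW
  have hfW : Module.finrank ℝ W = n - 1 := by
    rw [← h, A.rank_eq_finrank_span_row]
    rfl
  -- find a standard basis vector not in W
  have hWne : W ≠ ⊤ := by
    intro htop
    rw [htop] at hfW
    rw [finrank_top, Module.finrank_pi, Fintype.card_fin] at hfW
    omega
  obtain ⟨i, hi⟩ : ∃ i, Pi.single i (1:ℝ) ∉ W := by
    by_contra hc
    push_neg at hc
    apply hWne
    rw [eq_top_iff]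
    have := (Pi.basisFun ℝ (Fin n)).span_eq
    rw [← this]
    apply Submodule.span_le.2
    rintro _ ⟨k, rfl⟩
    simpa using hc k
  -- rows are not linearly independent
  have hnli : ¬ LinearIndependent ℝ (fun k => A k) := by
    intro hli
    have h2 : A.rank = n := by
      simpa using (show LinearIndependent ℝ A from hli).rank_matrix
    omega
  obtain ⟨g, hg, j, hgj⟩ := Fintype.not_linearIndependent_iff.1 hnli
  set B := A.updateRow j (Pi.single i 1) with hB
  have hBj : B j = Pi.single i 1 := Matrix.updateRow_self
  have hBk : ∀ k, k ≠ j → B k = A k := fun k hk => Matrix.updateRow_ne hk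
  set W' : Submodule ℝ (Fin n → ℝ) := Submodule.span ℝ (Set.range B) with hW'
  have hei : Pi.single i (1:ℝ) ∈ W' := by
    rw [← hBj]; exact Submodule.subset_span ⟨j, rfl⟩
  have hAk : ∀ k, k ≠ j → A k ∈ W' := fun k hk => by
    rw [← hBk k hk]; exact Submodule.subset_span ⟨k, rfl⟩
  have hAj : A j ∈ W' := by
    have hrel : g j • A j = - ∑ k ∈ Finset.univ.erase j, g k • A k := by
      rw [eq_neg_iff_add_eq_zero, ← Finset.add_sum_erase Finset.univ _ (Finset.mem_univ j)] at *
      exact hg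
    have : A j = (g j)⁻¹ • (g j • A j) := by
      rw [smul_smul, inv_mul_cancel₀ hgj, one_smul]
    rw [this, hrel]
    refine Submodule.smul_mem _ _ (Submodule.neg_mem _ (Submodule.sum_mem _ fun k hk => ?_))
    exact Submodule.smul_mem _ _ (hAk k (Finset.ne_of_mem_erase hk))
  have hWW' : W ≤ W' := by
    rw [hW]
    apply Submodule.span_le.2
    rintro _ ⟨k, rfl⟩
    by_cases hk : k = j
    · subst hk; exact hAj
    · exact hAk k hk
  have hlt : W < W' := lt_of_le_of_ne hWW' (fun he => hi (he ▸ hei))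
  have hfin : Module.finrank ℝ W' = n := by
    have h1 : Module.finrank ℝ W < Module.finrank ℝ W' := Submodule.finrank_lt_finrank_of_lt hlt
    have h2 : Module.finrank ℝ W' ≤ n := by
      simpa [Module.finrank_pi] using Submodule.finrank_le W'
    omega
  have htop : W' = ⊤ := by
    apply Submodule.eq_top_of_finrank_eq
    simpa [Module.finrank_pi] using hfin
  have hsurj : Function.Surjective B.vecMulLinear := by
    rw [← LinearMap.range_eq_top, range_vecMulLinear]
    exact htop
  have hunit : IsUnit B := by
    rw [← Matrix.vecMul_surjective_iff_isUnit]
    exact hsurj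
  have hdet : B.det ≠ 0 := by
    have := (Matrix.isUnit_iff_isUnit_det B).1 hunit
    exact this.ne_zero
  have : A.adjugate i j ≠ 0 := by
    rw [Matrix.adjugate_apply]
    exact hdet
  intro h0
  apply this
  rw [h0]
  rfl

open Matrix Finset

theorem det_deriv_transversality (m n : ℕ)
    (H : (Fin m → ℝ) → Matrix (Fin n) (Fin n) ℝ)
    (hH : ∀ i j, ContDiff ℝ 1 (fun x => H x i j))
    (xs : Fin m → ℝ) (hrank : (H xs).rank = n - 1)
    (p : Fin n → ℝ) (hp : p ≠ 0) (hker : (H xs).mulVec p = 0)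
    (q : Fin m → ℝ) :
    (Matrix.of fun i j => fderiv ℝ (fun x => H x i j) xs q).mulVec p ∉
        Set.range (H xs).mulVec ↔
      fderiv ℝ (fun x => (H x).det) xs q ≠ 0 := by
  classical
  set A := H xs with hA
  set D : Matrix (Fin n) (Fin n) ℝ := Matrix.of fun i j => fderiv ℝ (fun x => H x i j) xs q
    with hD
  obtain ⟨i₀, hpi₀⟩ : ∃ i, p i ≠ 0 := Function.ne_iff.1 hp
  have hn : 1 ≤ n := i₀.pos
  -- det A = 0
  have hdet0 : A.det = 0 := by
    by_contra hd
    have : IsUnit A := (Matrix.isUnit_iff_isUnit_det A).2 (isUnit_iff_ne_zero.2 hd)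
    have := Matrix.rank_of_isUnit A this
    rw [hrank, Fintype.card_fin] at this
    omega
  -- kernel is the span of p
  have hmemker : p ∈ LinearMap.ker A.mulVecLin := by
    rw [LinearMap.mem_ker, Matrix.mulVecLin_apply, hker]
  have hkerr : LinearMap.ker A.mulVecLin = Submodule.span ℝ {p} := by
    symm
    apply Submodule.eq_of_le_of_finrank_eq
    · exact (Submodule.span_singleton_le_iff_mem p _).2 hmemker
    · rw [finrank_span_singleton hp]
      have h1 := LinearMap.finrank_range_add_finrank_ker A.mulVecLin
      have h2 : Module.finrank ℝ (LinearMap.range A.mulVecLin) = n - 1 := hrank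
      rw [Module.finrank_pi, Fintype.card_fin] at h1
      omega
  -- columns of adjugate are multiples of p
  have hcols : ∀ j, ∃ a : ℝ, a • p = fun i => A.adjugate i j := by
    intro j
    rw [← Submodule.mem_span_singleton, ← hkerr, LinearMap.mem_ker, Matrix.mulVecLin_apply]
    have : A.mulVec (fun i => A.adjugate i j) = fun i => (A * A.adjugate) i j := by
      ext i
      simp [Matrix.mulVec, Matrix.mul_apply, dotProduct]
    rw [this, Matrix.mul_adjugate, hdet0]
    ext i
    simp
  choose c hc using hcols
  have hadjc : ∀ i j, A.adjugate i j = c j * p i := fun i j => (congr_fun (hc j) i).symm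
  have hadj : A.adjugate ≠ 0 := adjugate_ne_zero_of_rank n hn A hrank
  have hcne : c ≠ 0 := by
    intro h0
    apply hadj
    ext i j
    rw [hadjc i j, h0]
    simp
  -- c is in the left kernel
  have hcA : A.vecMul c = 0 := by
    have h1 : ∀ k, (A.adjugate * A) i₀ k = p i₀ * (A.vecMul c) k := by
      intro k
      simp only [Matrix.mul_apply, Matrix.vecMul, dotProduct, hadjc]
      rw [Finset.mul_sum]
      exact Finset.sum_congr rfl fun j _ => by ring
    have h2 : A.adjugate * A = 0 := by rw [Matrix.adjugate_mul, hdet0]; simp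
    ext k
    have := h1 k
    rw [h2] at this
    simp only [Matrix.zero_apply] at this
    have := this.symm
    rcases mul_eq_zero.1 this with h | h
    · exact absurd h hpi₀
    · simpa using h
  -- the range of mulVec is the kernel of v ↦ c ⬝ᵥ v
  set φ : (Fin n → ℝ) →ₗ[ℝ] ℝ :=
    { toFun := fun v => dotProduct c v
      map_add' := fun u v => dotProduct_add c u v
      map_smul' := fun r v => by simp [dotProduct_smul] } with hφ
  have hφc : φ c ≠ 0 := by
    simp only [hφ, LinearMap.coe_mk, AddHom.coe_mk]
    rw [Ne, dotProduct_self_eq_zero]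
    exact hcne
  have hφsurj : Function.Surjective φ := by
    intro r
    refine ⟨(r / φ c) • c, ?_⟩
    rw [_root_.map_smul, smul_eq_mul, div_mul_cancel₀ r hφc]
  have hrange : LinearMap.range A.mulVecLin = LinearMap.ker φ := by
    apply Submodule.eq_of_le_of_finrank_eq
    · rintro _ ⟨x, rfl⟩
      rw [LinearMap.mem_ker]
      show dotProduct c (A.mulVecLin x) = 0
      rw [Matrix.mulVecLin_apply, Matrix.dotProduct_mulVec, hcA, zero_dotProduct]
    · have h1 := LinearMap.finrank_range_add_finrank_ker φ
      have h2 : Module.finrank ℝ (LinearMap.range φ) = 1 := by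
        rw [LinearMap.range_eq_top.2 hφsurj, finrank_top, Module.finrank_self]
      rw [Module.finrank_pi, Fintype.card_fin] at h1
      have h3 : Module.finrank ℝ (LinearMap.range A.mulVecLin) = n - 1 := hrank
      omega
  have hmem : ∀ v, v ∈ Set.range A.mulVec ↔ dotProduct c v = 0 := by
    intro v
    constructor
    · rintro ⟨x, rfl⟩
      have : A.mulVec x ∈ LinearMap.range A.mulVecLin := ⟨x, Matrix.mulVecLin_apply A x⟩
      rw [hrange, LinearMap.mem_ker] at this
      exact this
    · intro hv
      have : v ∈ LinearMap.ker φ := hv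
      rw [← hrange] at this
      obtain ⟨x, hx⟩ := this
      exact ⟨x, by rw [← Matrix.mulVecLin_apply, hx]⟩
  -- compute the derivative of det
  have hderiv : fderiv ℝ (fun x => (H x).det) xs q = dotProduct c (D.mulVec p) := by
    rw [det_fderiv_eq m n H hH xs q]
    have : ∀ i, ((H xs).updateCol i fun k => fderiv ℝ (fun x => H x k i) xs q).det =
        ((A.adjugate).mulVec fun k => D k i) i := by
      intro i
      rw [← Matrix.cramer_eq_adjugate_mulVec, Matrix.cramer_apply]
      rfl
    simp_rw [this]
    simp only [Matrix.mulVec, dotProduct, hadjc]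
    rw [Finset.sum_comm]
    refine Finset.sum_congr rfl fun j _ => ?_
    rw [Finset.mul_sum]
    refine Finset.sum_congr rfl fun i _ => ?_
    ring
  rw [hderiv, hmem (D.mulVec p)]
end

section
/- Let H : ℝ → ℝ^{n×n} be a C¹ single-parameter matrix map with rank H(λ*) = n - 1. Then H'(λ*)p ∉ im H(λ*) for some (equivalently, any) nonzero p ∈ ker H(λ*) if and only if (det H)'(λ*) ≠ 0. -/
open Matrix

open Matrix

/-- rank-one update determinant expansion. -/
lemma det_add_outer_aux {n : ℕ} (A : Matrix (Fin n) (Fin n) ℝ) (u v : Fin n → ℝ) :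
    (Matrix.of fun i j => A i j + u i * v j).det
      = A.det + ∑ i, u i * (A.updateRow i v).det := by
  classical
  set f := (Matrix.detRowAlternating : (Fin n → ℝ) [⋀^Fin n]→ₗ[ℝ] ℝ) with hf
  set m' : Fin n → (Fin n → ℝ) := fun i => u i • v with hm'
  set F : Finset (Fin n) → ℝ := fun s => f (s.piecewise (fun i => A i) m') with hFdef
  have hM : (Matrix.of fun i j => A i j + u i * v j).det = f ((fun i => A i) + m') := by
    congr 1
  have hsum : f ((fun i => A i) + m') = ∑ s : Finset (Fin n), F s :=
    (f.toMultilinearMap).map_add_univ (fun i => A i) m'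
  rw [hM, hsum]
  have hF0 : F Finset.univ = A.det := by
    simp only [hFdef, Finset.piecewise_univ]
    rfl
  have hsplit : ∑ s : Finset (Fin n), F s
      = F Finset.univ + ∑ s ∈ (Finset.univ : Finset (Finset (Fin n))).erase Finset.univ, F s :=
    (Finset.add_sum_erase _ F (Finset.mem_univ Finset.univ)).symm
  set T : Finset (Finset (Fin n)) := Finset.univ.image (fun i : Fin n => ({i}ᶜ : Finset (Fin n))) with hT
  have hTsub : T ⊆ (Finset.univ : Finset (Finset (Fin n))).erase Finset.univ := by
    intro s hs
    simp only [hT, Finset.mem_image] at hs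
    obtain ⟨i, -, rfl⟩ := hs
    refine Finset.mem_erase.2 ⟨?_, Finset.mem_univ _⟩
    intro hc
    have : i ∈ ({i}ᶜ : Finset (Fin n)) := hc ▸ Finset.mem_univ i
    simp at this
  have hzero : ∀ s ∈ (Finset.univ : Finset (Finset (Fin n))).erase Finset.univ, s ∉ T → F s = 0 := by
    intro s hs hsT
    have hsne : s ≠ Finset.univ := (Finset.mem_erase.1 hs).1
    obtain ⟨i, hi⟩ : ∃ i, i ∉ s := by
      by_contra hc
      push_neg at hc
      exact hsne (Finset.eq_univ_iff_forall.2 hc)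
    have hsub : s ⊆ ({i}ᶜ : Finset (Fin n)) := by
      intro x hx
      simp only [Finset.mem_compl, Finset.mem_singleton]
      rintro rfl
      exact hi hx
    have hne : s ≠ ({i}ᶜ : Finset (Fin n)) := by
      rintro rfl
      exact hsT (Finset.mem_image.2 ⟨i, Finset.mem_univ _, rfl⟩)
    obtain ⟨j, hj1, hj2⟩ := Finset.exists_of_ssubset (hsub.ssubset_of_ne hne)
    have hji : j ≠ i := by simpa using hj1
    set g := s.piecewise (fun i => A i) m' with hg
    have hgi : g i = u i • v := Finset.piecewise_eq_of_notMem _ _ _ hi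
    have hgj : g j = u j • v := Finset.piecewise_eq_of_notMem _ _ _ hj2
    have e1 : F s = u i • f (Function.update g i v) := by
      have : g = Function.update g i (u i • v) := by rw [← hgi, Function.update_eq_self]
      calc F s = f g := rfl
        _ = f (Function.update g i (u i • v)) := by rw [← this]
        _ = u i • f (Function.update g i v) := f.map_update_smul g i (u i) v
    set g1 := Function.update g i v with hg1
    have e2 : f g1 = u j • f (Function.update g1 j v) := by
      have hg1j : g1 j = u j • v := by rw [hg1, Function.update_of_ne hji, hgj]
      have : g1 = Function.update g1 j (u j • v) := by rw [← hg1j, Function.update_eq_self]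
      calc f g1 = f (Function.update g1 j (u j • v)) := by rw [← this]
        _ = u j • f (Function.update g1 j v) := f.map_update_smul g1 j (u j) v
    have e3 : f (Function.update g1 j v) = 0 := by
      apply f.map_eq_zero_of_eq _ (i := i) (j := j) _ (fun h => hji h.symm)
      rw [Function.update_of_ne (fun h => hji h.symm), Function.update_self, hg1, Function.update_self]
    rw [e1, e2, e3]
    simp
  have hTsum : ∑ s ∈ (Finset.univ : Finset (Finset (Fin n))).erase Finset.univ, F s
      = ∑ s ∈ T, F s := (Finset.sum_subset hTsub hzero).symm
  have himg : ∑ s ∈ T, F s = ∑ i, F ({i}ᶜ : Finset (Fin n)) := by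
    rw [hT, Finset.sum_image]
    intro i _ j _ h
    have := congrArg (fun s : Finset (Fin n) => sᶜ) h
    simpa using this
  have hFi : ∀ i, F ({i}ᶜ : Finset (Fin n)) = u i * (A.updateRow i v).det := by
    intro i
    have h1 : ({i}ᶜ : Finset (Fin n)).piecewise (fun i => A i) m'
        = Function.update (fun i => A i) i (u i • v) := by
      rw [Finset.piecewise_compl, Finset.piecewise_singleton]
    have h2 : f (Function.update (fun i => A i) i (u i • v))
        = u i • f (Function.update (fun i => A i) i v) :=
      f.map_update_smul _ i (u i) v
    have h3 : f (Function.update (fun i => A i) i v) = (A.updateRow i v).det := rfl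
    calc F ({i}ᶜ : Finset (Fin n)) = f (Function.update (fun i => A i) i (u i • v)) := by
          rw [hFdef]; exact congrArg f h1
      _ = u i * (A.updateRow i v).det := by rw [h2, h3, smul_eq_mul]
  calc ∑ s : Finset (Fin n), F s
      = F Finset.univ + ∑ s ∈ (Finset.univ : Finset (Finset (Fin n))).erase Finset.univ, F s := hsplit
    _ = A.det + ∑ i, u i * (A.updateRow i v).det := by
        rw [hF0, hTsum, himg]
        congr 1
        exact Finset.sum_congr rfl fun i _ => hFi i

open Matrix

lemma hasDerivAt_det_path {n : ℕ} (H : ℝ → Matrix (Fin n) (Fin n) ℝ) (ls : ℝ)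
    (B : Matrix (Fin n) (Fin n) ℝ)
    (hB : ∀ i j, HasDerivAt (fun t => H t i j) (B i j) ls) :
    HasDerivAt (fun t => (H t).det) (∑ k, ((H ls).updateRow k (B k)).det) ls := by
  set A := H ls with hA
  have h1 : HasDerivAt (fun t => (H t).det)
      (∑ σ : Equiv.Perm (Fin n), ((Equiv.Perm.sign σ : ℤ) : ℝ) *
        ∑ i, (∏ j ∈ Finset.univ.erase i, A (σ j) j) * B (σ i) i) ls := by
    have hdet : (fun t => (H t).det)
        = fun t => ∑ σ : Equiv.Perm (Fin n), ((Equiv.Perm.sign σ : ℤ) : ℝ) * ∏ i, H t (σ i) i := by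
      funext t
      rw [Matrix.det_apply']
    rw [hdet]
    apply HasDerivAt.fun_sum
    intro σ _
    have hp : HasDerivAt (fun t => ∏ i, H t (σ i) i)
        (∑ i, (∏ j ∈ Finset.univ.erase i, A (σ j) j) • B (σ i) i) ls :=
      HasDerivAt.fun_finset_prod (fun i _ => hB (σ i) i)
    have := hp.const_mul ((Equiv.Perm.sign σ : ℤ) : ℝ)
    simpa [smul_eq_mul, Finset.mul_sum] using this
  have key : ∑ k, (A.updateRow k (B k)).det
      = ∑ σ : Equiv.Perm (Fin n), ((Equiv.Perm.sign σ : ℤ) : ℝ) *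
        ∑ i, (∏ j ∈ Finset.univ.erase i, A (σ j) j) * B (σ i) i := by
    have step1 : ∀ (k : Fin n) (σ : Equiv.Perm (Fin n)),
        (∏ i, (A.updateRow k (B k)) (σ i) i)
          = B k (σ.symm k) * ∏ i ∈ Finset.univ.erase (σ.symm k), A (σ i) i := by
      intro k σ
      have hfun : (fun i => (A.updateRow k (B k)) (σ i) i)
          = Function.update (fun i => A (σ i) i) (σ.symm k) (B k (σ.symm k)) := by
        funext i
        rcases eq_or_ne i (σ.symm k) with h | h
        · subst h
          rw [Function.update_self, Matrix.updateRow_apply, if_pos (by simp)]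
        · rw [Function.update_of_ne h, Matrix.updateRow_apply, if_neg]
          intro hc
          exact h (by rw [← hc]; simp)
      calc (∏ i, (A.updateRow k (B k)) (σ i) i)
          = ∏ i, Function.update (fun i => A (σ i) i) (σ.symm k) (B k (σ.symm k)) i := by
            rw [hfun]
        _ = B k (σ.symm k) * ∏ i ∈ Finset.univ.erase (σ.symm k), A (σ i) i := by
            rw [Finset.prod_update_of_mem (Finset.mem_univ _), ← Finset.erase_eq]
    calc ∑ k, (A.updateRow k (B k)).det
        = ∑ k, ∑ σ : Equiv.Perm (Fin n), ((Equiv.Perm.sign σ : ℤ) : ℝ)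
            * (B k (σ.symm k) * ∏ i ∈ Finset.univ.erase (σ.symm k), A (σ i) i) := by
          refine Finset.sum_congr rfl fun k _ => ?_
          rw [Matrix.det_apply']
          exact Finset.sum_congr rfl fun σ _ => by rw [step1 k σ]
      _ = ∑ σ : Equiv.Perm (Fin n), ∑ k, ((Equiv.Perm.sign σ : ℤ) : ℝ)
            * (B k (σ.symm k) * ∏ i ∈ Finset.univ.erase (σ.symm k), A (σ i) i) :=
          Finset.sum_comm
      _ = ∑ σ : Equiv.Perm (Fin n), ((Equiv.Perm.sign σ : ℤ) : ℝ) *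
            ∑ i, (∏ j ∈ Finset.univ.erase i, A (σ j) j) * B (σ i) i := by
          refine Finset.sum_congr rfl fun σ _ => ?_
          have hre : ∑ k, ((Equiv.Perm.sign σ : ℤ) : ℝ)
              * (B k (σ.symm k) * ∏ i ∈ Finset.univ.erase (σ.symm k), A (σ i) i)
            = ∑ i, ((Equiv.Perm.sign σ : ℤ) : ℝ)
              * (B (σ i) i * ∏ j ∈ Finset.univ.erase i, A (σ j) j) := by
            refine (Equiv.sum_comp σ (fun k => ((Equiv.Perm.sign σ : ℤ) : ℝ)
              * (B k (σ.symm k) * ∏ i ∈ Finset.univ.erase (σ.symm k), A (σ i) i))).symm.trans ?_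
            refine Finset.sum_congr rfl fun i _ => ?_
            simp
          rw [hre, Finset.mul_sum]
          exact Finset.sum_congr rfl fun i _ => by ring
  rw [key]
  exact h1

theorem det_deriv_transversality_one_param (n : ℕ)
    (H : ℝ → Matrix (Fin n) (Fin n) ℝ)
    (hH : ∀ i j, ContDiff ℝ 1 (fun t => H t i j))
    (ls : ℝ) (hrank : (H ls).rank = n - 1) :
    ∀ p : Fin n → ℝ, p ≠ 0 → (H ls).mulVec p = 0 →
      ((Matrix.of fun i j => deriv (fun t => H t i j) ls).mulVec p ∉
          Set.range (H ls).mulVec ↔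
        deriv (fun t => (H t).det) ls ≠ 0) := by
  intro p hp hker
  have hn : 0 < n := by
    rcases Nat.eq_zero_or_pos n with h | h
    · exfalso; apply hp; funext i; exact absurd i.isLt (by omega)
    · exact h
  set A := H ls with hAdef
  set B : Matrix (Fin n) (Fin n) ℝ := Matrix.of fun i j => deriv (fun t => H t i j) ls with hBdef
  have hBd : ∀ i j, HasDerivAt (fun t => H t i j) (B i j) ls := by
    intro i j
    have hd : DifferentiableAt ℝ (fun t => H t i j) ls :=
      ((hH i j).differentiable one_ne_zero).differentiableAt
    simpa [hBdef] using hd.hasDerivAt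
  have hderiv : deriv (fun t => (H t).det) ls = ∑ k, (A.updateRow k (B k)).det :=
    (hasDerivAt_det_path H ls B hBd).deriv
  -- rank facts
  have hrankA : Module.finrank ℝ (LinearMap.range A.mulVecLin) = n - 1 := hrank
  have hkerA : Module.finrank ℝ (LinearMap.ker A.mulVecLin) = 1 := by
    have h := LinearMap.finrank_range_add_finrank_ker A.mulVecLin
    simp only [Module.finrank_pi, Fintype.card_fin] at h
    omega
  have hrankAT : Module.finrank ℝ (LinearMap.range Aᵀ.mulVecLin) = n - 1 := by
    have : Aᵀ.rank = A.rank := Matrix.rank_transpose A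
    rw [← this] at hrank
    exact hrank
  have hkerAT : Module.finrank ℝ (LinearMap.ker Aᵀ.mulVecLin) = 1 := by
    have h := LinearMap.finrank_range_add_finrank_ker Aᵀ.mulVecLin
    simp only [Module.finrank_pi, Fintype.card_fin] at h
    omega
  -- q spanning left kernel
  obtain ⟨q, hqker, hq0⟩ : ∃ q ∈ LinearMap.ker Aᵀ.mulVecLin, q ≠ 0 := by
    have hne : LinearMap.ker Aᵀ.mulVecLin ≠ ⊥ := by
      intro hb; rw [hb] at hkerAT; simp at hkerAT
    obtain ⟨x, hx, h0⟩ := Submodule.exists_mem_ne_zero_of_ne_bot hne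
    exact ⟨x, hx, h0⟩
  have hqA : q ᵥ* A = 0 := by
    simpa [Matrix.mulVecLin_apply, Matrix.mulVec_transpose] using (LinearMap.mem_ker.1 hqker)
  -- kernels are spans
  have hpker : A.mulVecLin p = 0 := by simpa [Matrix.mulVecLin_apply] using hker
  have hker_elem : ∀ x, A *ᵥ x = 0 → ∃ c : ℝ, x = c • p := by
    have hsp_le : Submodule.span ℝ {p} ≤ LinearMap.ker A.mulVecLin := by
      rw [Submodule.span_le, Set.singleton_subset_iff]
      exact LinearMap.mem_ker.2 hpker
    have hspan := Submodule.eq_of_le_of_finrank_le hsp_le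
      (by rw [hkerA, finrank_span_singleton hp])
    intro x hx
    have hxm : x ∈ Submodule.span ℝ {p} := by
      rw [hspan]
      exact LinearMap.mem_ker.2 (by simpa [Matrix.mulVecLin_apply] using hx)
    obtain ⟨c, hc⟩ := Submodule.mem_span_singleton.1 hxm
    exact ⟨c, hc.symm⟩
  have hkerT_elem : ∀ x, Aᵀ *ᵥ x = 0 → ∃ c : ℝ, x = c • q := by
    have hsp_le : Submodule.span ℝ {q} ≤ LinearMap.ker Aᵀ.mulVecLin := by
      rw [Submodule.span_le, Set.singleton_subset_iff]
      exact hqker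
    have hspan := Submodule.eq_of_le_of_finrank_le hsp_le
      (by rw [hkerAT, finrank_span_singleton hq0])
    intro x hx
    have hxm : x ∈ Submodule.span ℝ {q} := by
      rw [hspan]
      exact LinearMap.mem_ker.2 (by rw [Matrix.mulVecLin_apply]; exact hx)
    obtain ⟨c, hc⟩ := Submodule.mem_span_singleton.1 hxm
    exact ⟨c, hc.symm⟩
  -- range characterization
  have hrange : ∀ y, y ∈ Set.range A.mulVec ↔ q ⬝ᵥ y = 0 := by
    set Q1 : Matrix (Fin 1) (Fin n) ℝ := Matrix.of fun _ j => q j with hQ1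
    have hQy : ∀ y, Q1.mulVecLin y = fun _ => q ⬝ᵥ y := by
      intro y; funext i
      simp [hQ1, Matrix.mulVecLin_apply, Matrix.mulVec, dotProduct]
    have hrangeQ : Module.finrank ℝ (LinearMap.range Q1.mulVecLin) = 1 := by
      have hle : Module.finrank ℝ (LinearMap.range Q1.mulVecLin) ≤ 1 := by
        have := Submodule.finrank_le (LinearMap.range Q1.mulVecLin)
        simpa using this
      have hne : LinearMap.range Q1.mulVecLin ≠ ⊥ := by
        intro hb
        have h1 : Q1.mulVecLin q = 0 := by
          have : Q1.mulVecLin q ∈ LinearMap.range Q1.mulVecLin := ⟨q, rfl⟩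
          rwa [hb, Submodule.mem_bot] at this
        have h2 : q ⬝ᵥ q = 0 := by
          rw [hQy q] at h1
          exact congrFun h1 ⟨0, one_pos⟩
        exact hq0 (dotProduct_self_eq_zero.1 h2)
      have hnz : Module.finrank ℝ (LinearMap.range Q1.mulVecLin) ≠ 0 := by
        intro h0
        exact hne (Submodule.finrank_eq_zero.1 h0)
      omega
    have hkerQ : Module.finrank ℝ (LinearMap.ker Q1.mulVecLin) = n - 1 := by
      have h := LinearMap.finrank_range_add_finrank_ker Q1.mulVecLin
      simp only [Module.finrank_pi, Fintype.card_fin] at h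
      omega
    have hle : LinearMap.range A.mulVecLin ≤ LinearMap.ker Q1.mulVecLin := by
      rintro y ⟨x, rfl⟩
      rw [LinearMap.mem_ker, hQy]
      funext i
      simp only [Matrix.mulVecLin_apply, Matrix.dotProduct_mulVec, hqA]
      simp [zero_dotProduct]
    have heq := Submodule.eq_of_le_of_finrank_le hle (by rw [hkerQ, hrankA])
    intro y
    constructor
    · rintro ⟨x, rfl⟩
      have : A.mulVecLin x ∈ LinearMap.ker Q1.mulVecLin := heq ▸ ⟨x, rfl⟩
      have h2 := LinearMap.mem_ker.1 this
      rw [hQy] at h2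
      have := congrFun h2 ⟨0, by omega⟩
      simpa [Matrix.mulVecLin_apply] using this
    · intro hy
      have : y ∈ LinearMap.ker Q1.mulVecLin := by
        rw [LinearMap.mem_ker, hQy]
        funext i
        simpa using hy
      rw [← heq] at this
      obtain ⟨x, hx⟩ := this
      exact ⟨x, by simpa [Matrix.mulVecLin_apply] using hx⟩
  -- determinant of A is zero
  have hdetA : A.det = 0 := Matrix.exists_mulVec_eq_zero_iff.1 ⟨p, hp, hker⟩
  -- adjugate structure
  set adjA := A.adjugate with hadjdef
  have hAadj : A * adjA = 0 := by rw [hadjdef, Matrix.mul_adjugate, hdetA, zero_smul]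
  have hadjA : adjA * A = 0 := by rw [hadjdef, Matrix.adjugate_mul, hdetA, zero_smul]
  have hcol : ∀ k, ∃ c : ℝ, (fun j => adjA j k) = c • p := by
    intro k
    apply hker_elem
    funext i
    have h0 : (A * adjA) i k = 0 := by rw [hAadj]; rfl
    simpa [Matrix.mul_apply, Matrix.mulVec, dotProduct] using h0
  have hrow : ∀ k, ∃ d : ℝ, (fun j => adjA k j) = d • q := by
    intro k
    apply hkerT_elem
    funext i
    have h0 : (adjA * A) k i = 0 := by rw [hadjA]; rfl
    simpa [Matrix.mul_apply, Matrix.mulVec, dotProduct,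
      Matrix.transpose_apply, mul_comm] using h0
  -- the perturbed matrix is invertible
  have hMdet : (Matrix.of fun i j => A i j + q i * p j).det ≠ 0 := by
    intro h0
    obtain ⟨x, hx0, hxM⟩ := Matrix.exists_mulVec_eq_zero_iff.2 h0
    have hMx : A *ᵥ x + (p ⬝ᵥ x) • q = 0 := by
      funext i
      have := congrFun hxM i
      simp only [Matrix.mulVec, dotProduct, Matrix.of_apply, add_mul,
        Finset.sum_add_distrib] at this
      simpa [Matrix.mulVec, dotProduct, Finset.mul_sum, mul_assoc,
        mul_comm, mul_left_comm] using this
    have h1 : q ⬝ᵥ (A *ᵥ x) = 0 := (hrange (A *ᵥ x)).1 ⟨x, rfl⟩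
    have h2 : q ⬝ᵥ (A *ᵥ x + (p ⬝ᵥ x) • q) = 0 := by rw [hMx]; simp
    rw [dotProduct_add, h1, zero_add, dotProduct_smul, smul_eq_mul] at h2
    have hqq : q ⬝ᵥ q ≠ 0 := fun h => hq0 (dotProduct_self_eq_zero.1 h)
    have hpx : p ⬝ᵥ x = 0 := by
      rcases mul_eq_zero.1 h2 with h | h
      · exact h
      · exact absurd h hqq
    have hAx : A *ᵥ x = 0 := by
      rw [hpx, zero_smul, add_zero] at hMx
      exact hMx
    obtain ⟨c, rfl⟩ := hker_elem x hAx
    have hpp : p ⬝ᵥ p ≠ 0 := fun h => hp (dotProduct_self_eq_zero.1 h)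
    have : c = 0 := by
      rw [dotProduct_smul, smul_eq_mul] at hpx
      rcases mul_eq_zero.1 hpx with h | h
      · exact h
      · exact absurd h hpp
    exact hx0 (by rw [this, zero_smul])
  -- find a nonzero adjugate entry
  have hexp := det_add_outer_aux A q p
  have hsum_ne : (∑ i, q i * (A.updateRow i p).det) ≠ 0 := by
    intro h0
    apply hMdet
    rw [hexp, hdetA, h0, add_zero]
  obtain ⟨i0, -, hi0⟩ := Finset.exists_ne_zero_of_sum_ne_zero hsum_ne
  have hupd : (A.updateRow i0 p).det ≠ 0 := fun h => hi0 (by rw [h, mul_zero])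
  have hupd_eq : ∀ (k : Fin n) (b : Fin n → ℝ),
      (A.updateRow k b).det = ∑ j, adjA j k * b j := by
    intro k b
    rw [← Matrix.cramer_transpose_apply, Matrix.cramer_eq_adjugate_mulVec,
      ← Matrix.adjugate_transpose]
    simp [Matrix.mulVec, dotProduct, Matrix.transpose_apply, hadjdef]
  obtain ⟨j0, -, hj0⟩ : ∃ j0 ∈ Finset.univ, adjA j0 i0 * p j0 ≠ 0 := by
    apply Finset.exists_ne_zero_of_sum_ne_zero
    rw [← hupd_eq i0 p]
    exact hupd
  have hadj00 : adjA j0 i0 ≠ 0 := fun h => hj0 (by rw [h, zero_mul])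
  have hpj0 : p j0 ≠ 0 := fun h => hj0 (by rw [h, mul_zero])
  obtain ⟨dj, hdj⟩ := hrow j0
  have hdj0 : dj ≠ 0 := by
    intro h
    apply hadj00
    have := congrFun hdj i0
    simpa [h] using this
  set c : ℝ := dj / p j0 with hcdef
  have hc0 : c ≠ 0 := div_ne_zero hdj0 hpj0
  have hentry : ∀ j k, adjA j k = c * p j * q k := by
    intro j k
    obtain ⟨ck, hck⟩ := hcol k
    have e1 : adjA j k = ck * p j := by simpa using congrFun hck j
    have e2 : adjA j0 k = ck * p j0 := by simpa using congrFun hck j0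
    have e3 : adjA j0 k = dj * q k := by simpa using congrFun hdj k
    have hckv : ck = dj * q k / p j0 := by
      rw [eq_div_iff hpj0, ← e2, e3]
    rw [e1, hckv, hcdef]
    ring
  -- compute the derivative
  have hval : deriv (fun t => (H t).det) ls = c * (q ⬝ᵥ (B *ᵥ p)) := by
    rw [hderiv]
    have hterm : ∀ k, (A.updateRow k (B k)).det = c * (q k * (B *ᵥ p) k) := by
      intro k
      rw [hupd_eq k (B k)]
      calc ∑ j, adjA j k * B k j
          = ∑ j, c * p j * q k * B k j :=
            Finset.sum_congr rfl fun j _ => by rw [hentry]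
        _ = c * (q k * ∑ j, B k j * p j) := by
            rw [Finset.mul_sum, Finset.mul_sum]
            exact Finset.sum_congr rfl fun j _ => by ring
        _ = c * (q k * (B *ᵥ p) k) := rfl
    rw [Finset.sum_congr rfl fun k _ => hterm k, ← Finset.mul_sum]
    congr 1
  -- conclude
  rw [hval]
  constructor
  · intro hmem
    exact mul_ne_zero hc0 (fun hd => hmem ((hrange _).2 hd))
  · intro hne hmem
    exact hne (by rw [(hrange _).1 hmem, mul_zero])
end

section
/- Let f ∈ C²(ℝⁿ, ℝⁿ) with rank f'(x*) = n - 1 and p ∈ ker f'(x*) \ {0}. Then for any q ∈ ℝⁿ, the bilinear second derivative satisfies f''(x*)pq ∉ im f'(x*) if and only if the directional derivative of x ↦ det f'(x) at x* in direction q is nonzero. -/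
open Matrix Module

noncomputable def detCM (n : ℕ) : ContinuousMultilinearMap ℝ (fun _ : Fin n => (Fin n → ℝ)) ℝ where
  toMultilinearMap := (Matrix.detRowAlternating (R := ℝ) (n := Fin n)).toMultilinearMap
  cont := by
    show Continuous fun M : Matrix (Fin n) (Fin n) ℝ => Matrix.detRowAlternating M
    exact continuous_id.matrix_det

lemma detCM_apply {n : ℕ} (M : Matrix (Fin n) (Fin n) ℝ) : detCM n M = M.det := rfl

lemma det_update_sum {n : ℕ} (M H : Matrix (Fin n) (Fin n) ℝ) :
    ∑ j, (M.updateRow j (H j)).det = ∑ j, ∑ i, H j i * M.adjugate i j := by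
  refine Finset.sum_congr rfl fun j _ => ?_
  have hL : ∀ b : Fin n → ℝ, (M.updateRow j b).det =
      (Matrix.detRowAlternating (R := ℝ) (n := Fin n)).toMultilinearMap.toLinearMap M j b :=
    fun b => rfl
  have hHj : H j = ∑ i, H j i • (Pi.single i 1 : Fin n → ℝ) := by
    ext k
    rw [Finset.sum_apply]
    simp [Pi.single_apply, eq_comm]
  rw [hL]
  conv_lhs => rw [hHj]
  rw [map_sum]
  refine Finset.sum_congr rfl fun i _ => ?_
  rw [_root_.map_smul, ← hL, ← Matrix.adjugate_apply, smul_eq_mul]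

lemma adjugate_entry_ne_zero {n : ℕ} (hn : 0 < n) (M : Matrix (Fin n) (Fin n) ℝ)
    (h : M.rank = n - 1) : ∃ i j, M.adjugate i j ≠ 0 := by
  by_contra hadj
  push_neg at hadj
  have hfin : finrank ℝ (Fin n → ℝ) = n := Module.finrank_fin_fun ℝ
  set K := LinearMap.ker (Mᵀ.mulVecLin) with hK
  have hmemK : ∀ v : Fin n → ℝ, v ∈ K ↔ v ᵥ* M = 0 := by
    intro v
    rw [LinearMap.mem_ker, Matrix.mulVecLin_transpose, Matrix.vecMulLinear_apply]
  have hrk : finrank ℝ (LinearMap.range Mᵀ.mulVecLin) = n - 1 := by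
    have h2 := Matrix.rank_transpose M
    rw [h] at h2
    exact h2
  have hker : finrank ℝ K = 1 := by
    rw [hK]
    have h3 := LinearMap.finrank_range_add_finrank_ker (Mᵀ.mulVecLin)
    rw [hfin, hrk] at h3
    omega
  obtain ⟨r, hrK, hr0⟩ : ∃ r ∈ K, r ≠ 0 := by
    rw [← Submodule.ne_bot_iff]
    intro hbot; rw [hbot] at hker; simp at hker
  have hKspan : Submodule.span ℝ {r} = K := by
    apply Submodule.eq_of_le_of_finrank_eq
    · rwa [Submodule.span_singleton_le_iff_mem]
    · rw [finrank_span_singleton hr0, hker]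
  obtain ⟨j, hj⟩ : ∃ j, r j ≠ 0 := Function.ne_iff.mp hr0
  set s : Finset (Fin n → ℝ) := (Finset.univ.erase j).image M with hs
  set S := Submodule.span ℝ (s : Set (Fin n → ℝ)) with hS
  have hMS : ∀ k, k ≠ j → M k ∈ S := fun k hk =>
    Submodule.subset_span (Finset.mem_coe.mpr (Finset.mem_image.mpr ⟨k, Finset.mem_erase.mpr ⟨hk, Finset.mem_univ k⟩, rfl⟩))
  have hsingle : ∀ i, (Pi.single i 1 : Fin n → ℝ) ∈ S := by
    intro i
    have hdet : (M.updateRow j (Pi.single i 1)).det = 0 := by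
      rw [← Matrix.adjugate_apply]; exact hadj i j
    obtain ⟨v, hv0, hv⟩ := (Matrix.exists_vecMul_eq_zero_iff).mpr hdet
    by_cases hvj : v j = 0
    · exfalso
      have hvM : v ᵥ* M = 0 := by
        funext k
        have h4 : (v ᵥ* M.updateRow j (Pi.single i 1)) k = 0 := by rw [hv]; rfl
        have h5 : (v ᵥ* M.updateRow j (Pi.single i 1)) k = (v ᵥ* M) k := by
          simp only [Matrix.vecMul, dotProduct]
          refine Finset.sum_congr rfl fun l _ => ?_
          by_cases hl : l = j
          · subst hl; rw [hvj]; ring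
          · rw [Matrix.updateRow_ne hl]
        rw [← h5, h4]
        rfl
      have hvK : v ∈ K := (hmemK v).mpr hvM
      rw [← hKspan, Submodule.mem_span_singleton] at hvK
      obtain ⟨a, ha⟩ := hvK
      have : a = 0 := by
        have := congrFun ha j
        simp only [Pi.smul_apply, smul_eq_mul] at this
        rw [hvj] at this
        rcases mul_eq_zero.mp this with h' | h'
        · exact h'
        · exact absurd h' hj
      rw [this, zero_smul] at ha
      exact hv0 ha.symm
    · have key : (Pi.single i 1 : Fin n → ℝ) =
          (-(v j)⁻¹) • ∑ l ∈ Finset.univ.erase j, v l • M l := by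
        funext k
        have h4 : ∑ l, v l * (M.updateRow j (Pi.single i 1)) l k = 0 := by
          have := congrFun hv k
          simpa [Matrix.vecMul, dotProduct] using this
        rw [← Finset.add_sum_erase _ _ (Finset.mem_univ j)] at h4
        rw [Matrix.updateRow_self] at h4
        have h5 : ∑ l ∈ Finset.univ.erase j, v l * (M.updateRow j (Pi.single i 1)) l k
            = ∑ l ∈ Finset.univ.erase j, v l * M l k := by
          refine Finset.sum_congr rfl fun l hl => ?_
          rw [Matrix.updateRow_ne (Finset.ne_of_mem_erase hl)]
        rw [h5] at h4
        simp only [Pi.smul_apply, smul_eq_mul, Finset.sum_apply]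
        have hX : (Pi.single i 1 : Fin n → ℝ) k
            = -(∑ l ∈ Finset.univ.erase j, v l * M l k) / v j := by
          rw [eq_div_iff hvj]; linarith
        rw [hX, div_eq_mul_inv]
        ring
      rw [key]
      exact Submodule.smul_mem _ _ (Submodule.sum_mem _ fun l hl =>
        Submodule.smul_mem _ _ (hMS l (Finset.ne_of_mem_erase hl)))
  have hStop : S = ⊤ := by
    rw [eq_top_iff]
    intro x _
    have hx : x = ∑ i, x i • (Pi.single i 1 : Fin n → ℝ) := by
      funext k
      rw [Finset.sum_apply]
      simp [Pi.single_apply, eq_comm]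
    rw [hx]
    exact Submodule.sum_mem _ fun i _ => Submodule.smul_mem _ _ (hsingle i)
  have hle : finrank ℝ S ≤ s.card := finrank_span_finset_le_card s
  have hcard : s.card ≤ n - 1 := by
    calc s.card ≤ (Finset.univ.erase j).card := Finset.card_image_le
    _ = n - 1 := by rw [Finset.card_erase_of_mem (Finset.mem_univ j)]; simp
  rw [hStop, finrank_top, hfin] at hle
  omega

theorem second_deriv_transversality (n : ℕ)
    (f : (Fin n → ℝ) → (Fin n → ℝ)) (hf : ContDiff ℝ 2 f)
    (xs : Fin n → ℝ)
    (hrank : Module.finrank ℝ (LinearMap.range ((fderiv ℝ f xs : (Fin n → ℝ) →L[ℝ] (Fin n → ℝ)) :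
      (Fin n → ℝ) →ₗ[ℝ] (Fin n → ℝ))) = n - 1)
    (p : Fin n → ℝ) (hp : p ≠ 0) (hker : fderiv ℝ f xs p = 0)
    (q : Fin n → ℝ) :
    iteratedFDeriv ℝ 2 f xs ![p, q] ∉ Set.range (fderiv ℝ f xs) ↔
      fderiv ℝ (fun x =>
        LinearMap.det ((fderiv ℝ f x : (Fin n → ℝ) →L[ℝ] (Fin n → ℝ)) :
          (Fin n → ℝ) →ₗ[ℝ] (Fin n → ℝ))) xs q ≠ 0 := by
  classical
  have hn : 0 < n := by
    rcases Nat.eq_zero_or_pos n with h0 | h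
    · exfalso; apply hp; subst h0; funext i; exact i.elim0
    · exact h
  set A := fderiv ℝ f xs with hA
  set ℓ : (Fin n → ℝ) →ₗ[ℝ] (Fin n → ℝ) := (A : (Fin n → ℝ) →ₗ[ℝ] (Fin n → ℝ)) with hℓ
  -- second derivative
  have hf1 : ContDiff ℝ 1 (fderiv ℝ f) := hf.fderiv_right (by norm_num)
  set D := fderiv ℝ (fderiv ℝ f) xs with hDdef
  have hD : HasFDerivAt (fderiv ℝ f) D xs :=
    ((hf1.differentiable one_ne_zero) xs).hasFDerivAt
  have hsymm : D p q = D q p := (hf.contDiffAt.isSymmSndFDerivAt (by norm_num)) p q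
  have hiter : iteratedFDeriv ℝ 2 f xs ![p, q] = D p q := by
    rw [iteratedFDeriv_two_apply]
    simp
    rfl
  -- the matrix-valued map
  let T : ((Fin n → ℝ) →L[ℝ] (Fin n → ℝ)) →ₗ[ℝ] (Fin n → Fin n → ℝ) :=
    { toFun := fun B => fun i j => B (Pi.single j 1) i
      map_add' := by intros; funext i j; simp
      map_smul' := by intros; funext i j; simp }
  let T' : ((Fin n → ℝ) →L[ℝ] (Fin n → ℝ)) →L[ℝ] (Fin n → Fin n → ℝ) :=
    LinearMap.toContinuousLinearMap T
  have hT' : ∀ B : (Fin n → ℝ) →L[ℝ] (Fin n → ℝ), ∀ i j, T' B i j = B (Pi.single j 1) i :=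
    fun B i j => rfl
  have hJ : HasFDerivAt (fun x => T' (fderiv ℝ f x)) (T' ∘L D) xs :=
    T'.hasFDerivAt.comp xs hD
  set M : Matrix (Fin n) (Fin n) ℝ := Matrix.of (T' A) with hM
  have hsingle_eq : ∀ j : Fin n, (fun j' => if j' = j then (1:ℝ) else 0) = Pi.single j 1 := by
    intro j; funext j'; simp [Pi.single_apply]
  have hMl : M = LinearMap.toMatrix' ℓ := by
    ext i j
    rw [LinearMap.toMatrix'_apply]
    rfl
  have hMv : ∀ v, M.mulVec v = A v := by
    intro v
    have h1 : Matrix.toLin' M v = M.mulVec v := Matrix.toLin'_apply M v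
    rw [hMl, Matrix.toLin'_toMatrix'] at h1
    exact h1.symm
  -- derivative of the determinant function
  have hFcomp : HasFDerivAt (fun x => detCM n (T' (fderiv ℝ f x)))
      (((detCM n).linearDeriv (T' A)) ∘L (T' ∘L D)) xs := by
    exact HasFDerivAt.comp xs (ContinuousMultilinearMap.hasFDerivAt (detCM n) (T' A)) hJ
  have hF2 : HasFDerivAt (fun x =>
      LinearMap.det ((fderiv ℝ f x : (Fin n → ℝ) →L[ℝ] (Fin n → ℝ)) :
        (Fin n → ℝ) →ₗ[ℝ] (Fin n → ℝ)))
      (((detCM n).linearDeriv (T' A)) ∘L (T' ∘L D)) xs := by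
    apply hFcomp.congr_of_eventuallyEq
    apply Filter.Eventually.of_forall
    intro x
    show LinearMap.det ((fderiv ℝ f x : (Fin n → ℝ) →L[ℝ] (Fin n → ℝ)) :
        (Fin n → ℝ) →ₗ[ℝ] (Fin n → ℝ)) = detCM n (T' (fderiv ℝ f x))
    have h9 : detCM n (T' (fderiv ℝ f x)) = (Matrix.of (T' (fderiv ℝ f x))).det := rfl
    rw [h9, ← LinearMap.det_toMatrix' ((fderiv ℝ f x : (Fin n → ℝ) →L[ℝ] (Fin n → ℝ)) :
        (Fin n → ℝ) →ₗ[ℝ] (Fin n → ℝ))]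
    congr 1
  set Hq : Matrix (Fin n) (Fin n) ℝ := Matrix.of (T' (D q)) with hHq
  have hval : fderiv ℝ (fun x =>
      LinearMap.det ((fderiv ℝ f x : (Fin n → ℝ) →L[ℝ] (Fin n → ℝ)) :
        (Fin n → ℝ) →ₗ[ℝ] (Fin n → ℝ))) xs q
      = ∑ j, ∑ i, Hq j i * M.adjugate i j := by
    rw [hF2.fderiv]
    show (detCM n).linearDeriv (T' A) (T' (D q)) = _
    rw [ContinuousMultilinearMap.linearDeriv_apply]
    have h10 : ∀ j, detCM n (Function.update (T' A) j (T' (D q) j))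
        = (M.updateRow j (Hq j)).det := fun j => rfl
    simp_rw [h10]
    exact det_update_sum M Hq
  -- general mulVec fact
  have hTmul : ∀ (B : (Fin n → ℝ) →L[ℝ] (Fin n → ℝ)) (v : Fin n → ℝ),
      (Matrix.of (T' B)).mulVec v = B v := by
    intro B v
    funext i
    have hv : v = ∑ j, v j • (Pi.single j 1 : Fin n → ℝ) := by
      funext k; rw [Finset.sum_apply]; simp [Pi.single_apply, eq_comm]
    conv_rhs => rw [hv]
    rw [map_sum, Finset.sum_apply]
    simp only [_root_.map_smul, ContinuousLinearMap.coe_smul', Pi.smul_apply, smul_eq_mul]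
    simp only [Matrix.mulVec, dotProduct, mul_comm]
    exact Finset.sum_congr rfl fun j _ => rfl
  have hMv : ∀ v, M.mulVec v = A v := hTmul A
  -- kernel and range facts
  have hfin : finrank ℝ (Fin n → ℝ) = n := Module.finrank_fin_fun ℝ
  have hrange : LinearMap.range ℓ = LinearMap.range (A : (Fin n → ℝ) →ₗ[ℝ] (Fin n → ℝ)) := by
    ext w
    simp only [LinearMap.mem_range]
    exact Iff.rfl
  have hrangefin : finrank ℝ (LinearMap.range ℓ) = n - 1 := by rw [hrange]; exact hrank
  have hkerfin : finrank ℝ (LinearMap.ker ℓ) = 1 := by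
    have h3 := LinearMap.finrank_range_add_finrank_ker ℓ
    rw [hfin, hrangefin] at h3; omega
  have hpker : p ∈ LinearMap.ker ℓ := by rw [LinearMap.mem_ker]; exact hker
  have hkspan : Submodule.span ℝ {p} = LinearMap.ker ℓ := by
    apply Submodule.eq_of_le_of_finrank_eq
    · rwa [Submodule.span_singleton_le_iff_mem]
    · rw [finrank_span_singleton hp, hkerfin]
  have hMrank : M.rank = n - 1 := by
    have hml : M.mulVecLin = ℓ := by
      apply LinearMap.ext; intro v
      exact hMv v
    show finrank ℝ (LinearMap.range M.mulVecLin) = n - 1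
    rw [hml]; exact hrangefin
  have hdet0 : M.det = 0 :=
    Matrix.exists_mulVec_eq_zero_iff.mp ⟨p, hp, by rw [hMv]; exact hker⟩
  have hcolmem : ∀ j, (fun i => M.adjugate i j) ∈ LinearMap.ker ℓ := by
    intro j
    rw [LinearMap.mem_ker]
    have h6 : M * M.adjugate = (0 : Matrix (Fin n) (Fin n) ℝ) := by
      rw [Matrix.mul_adjugate, hdet0, zero_smul]
    have h4 : M.mulVec (fun i => M.adjugate i j) = 0 := by
      funext i
      have h5 := congrFun (congrFun h6 i) j
      rw [Matrix.mul_apply] at h5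
      simpa [Matrix.mulVec, dotProduct] using h5
    rw [show ℓ (fun i => M.adjugate i j) = A (fun i => M.adjugate i j) from rfl, ← hMv]
    exact h4
  choose c hc using fun j => Submodule.mem_span_singleton.mp
    (by rw [hkspan]; exact hcolmem j)
  obtain ⟨i0, j0, hadj0⟩ := adjugate_entry_ne_zero hn M hMrank
  have hcp0 : c j0 * p i0 ≠ 0 := by
    have h7 := congrFun (hc j0) i0
    simp only [Pi.smul_apply, smul_eq_mul] at h7
    rw [h7]; exact hadj0
  have hpi0 : p i0 ≠ 0 := fun h0 => hcp0 (by rw [h0, mul_zero])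
  have hcM : ∀ k, ∑ j, c j * M j k = 0 := by
    intro k
    have h6 : M.adjugate * M = (0 : Matrix (Fin n) (Fin n) ℝ) := by
      rw [Matrix.adjugate_mul, hdet0, zero_smul]
    have h7 := congrFun (congrFun h6 i0) k
    rw [Matrix.mul_apply] at h7
    have h8 : ∀ j, M.adjugate i0 j = c j * p i0 := by
      intro j
      have := congrFun (hc j) i0
      simp only [Pi.smul_apply, smul_eq_mul] at this
      exact this.symm
    simp_rw [h8] at h7
    have h9 : ∑ j, c j * p i0 * M j k = p i0 * ∑ j, c j * M j k := by
      rw [Finset.mul_sum]; exact Finset.sum_congr rfl fun j _ => by ring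
    rw [h9] at h7
    rcases mul_eq_zero.mp h7 with h' | h'
    · exact absurd h' hpi0
    · exact h'
  -- the linear functional
  let ψ : (Fin n → ℝ) →ₗ[ℝ] ℝ :=
    { toFun := fun w => ∑ j, c j * w j
      map_add' := by intros; simp [mul_add, Finset.sum_add_distrib]
      map_smul' := by
        intros r w
        simp only [Pi.smul_apply, smul_eq_mul, RingHom.id_apply, Finset.mul_sum]
        exact Finset.sum_congr rfl fun j _ => by ring }
  have hψapply : ∀ w, ψ w = ∑ j, c j * w j := fun w => rfl
  have hAker : ∀ v, ψ (A v) = 0 := by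
    intro v
    rw [hψapply]
    have h10 : ∀ j, A v j = ∑ k, M j k * v k := by
      intro j
      rw [← hMv]
      rfl
    simp_rw [h10, Finset.mul_sum]
    rw [Finset.sum_comm]
    have h11 : ∀ k, ∑ j, c j * (M j k * v k) = (∑ j, c j * M j k) * v k := by
      intro k
      rw [Finset.sum_mul]
      exact Finset.sum_congr rfl fun j _ => by ring
    simp_rw [h11]
    simp [hcM]
  have hψj0 : ψ (Pi.single j0 1) = c j0 := by
    rw [hψapply]
    simp [Pi.single_apply]
  have hcj0 : c j0 ≠ 0 := fun h0 => hcp0 (by rw [h0, zero_mul])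
  have hψrange : finrank ℝ (LinearMap.range ψ) = 1 := by
    have h1 : LinearMap.range ψ ≠ ⊥ := by
      intro h0
      have hm : ψ (Pi.single j0 1) ∈ LinearMap.range ψ := LinearMap.mem_range_self _ _
      rw [h0, Submodule.mem_bot] at hm
      rw [hψj0] at hm
      exact hcj0 hm
    have h2 : finrank ℝ (LinearMap.range ψ) ≤ 1 := by
      have := Submodule.finrank_le (LinearMap.range ψ)
      simpa using this
    have h3 : finrank ℝ (LinearMap.range ψ) ≠ 0 := by
      intro h0
      exact h1 (Submodule.finrank_eq_zero.mp h0)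
    omega
  have hψker : finrank ℝ (LinearMap.ker ψ) = n - 1 := by
    have h3 := LinearMap.finrank_range_add_finrank_ker ψ
    rw [hfin, hψrange] at h3; omega
  have hrangeker : LinearMap.range ℓ = LinearMap.ker ψ := by
    apply Submodule.eq_of_le_of_finrank_eq
    · rintro w ⟨v, rfl⟩
      rw [LinearMap.mem_ker]
      exact hAker v
    · rw [hrangefin, hψker]
  -- final assembly
  rw [hiter, hval]
  have hsum : ∑ j, ∑ i, Hq j i * M.adjugate i j = ψ (D p q) := by
    have h1 : ∀ (j i : Fin n), M.adjugate i j = c j * p i := by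
      intro j i
      have := congrFun (hc j) i
      simp only [Pi.smul_apply, smul_eq_mul] at this
      exact this.symm
    have h2 : ∀ j, ∑ i, Hq j i * (c j * p i) = c j * (Hq.mulVec p) j := by
      intro j
      simp only [Matrix.mulVec, dotProduct, Finset.mul_sum]
      exact Finset.sum_congr rfl fun i _ => by ring
    have h3 : Hq.mulVec p = D p q := by
      rw [hHq, hTmul (D q) p, ← hsymm]
    rw [hψapply]
    simp_rw [h1, h2, h3]
  rw [hsum]
  constructor
  · intro hw hpsi
    apply hw
    have h12 : D p q ∈ LinearMap.ker ψ := by rw [LinearMap.mem_ker]; exact hpsi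
    rw [← hrangeker] at h12
    obtain ⟨v, hv⟩ := h12
    exact ⟨v, hv⟩
  · intro hpsi hw
    obtain ⟨v, hv⟩ := hw
    apply hpsi
    rw [← hv]
    exact hAker v
end

section
/- Let B = (B₁ B₂ B₃) and Q = (Q₁ Q₂ Q₃) be real matrices, partitioned into three pairwise-disjoint column blocks, whose kernels are orthogonal complements of each other (cut space/cycle space orthogonality), and let P be a positive definite (not necessarily symmetric) real matrix of compatible size. Then the kernel of the stacked matrix [[B₁, 0, B₃P],[0, Q₂, Q₃]] equals ker B₁ × ker Q₂ × {0}. -/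
open Matrix

theorem kernel_of_stacked_matrix (a b n₁ n₂ n₃ : ℕ)
    (B : Matrix (Fin a) (Fin n₁ ⊕ Fin n₂ ⊕ Fin n₃) ℝ)
    (Q : Matrix (Fin b) (Fin n₁ ⊕ Fin n₂ ⊕ Fin n₃) ℝ)
    (horth : ∀ (u : Fin a → ℝ) (v : Fin b → ℝ),
      Bᵀ.mulVec u ⬝ᵥ Qᵀ.mulVec v = 0)
    (hspan : LinearMap.range Bᵀ.mulVecLin ⊔ LinearMap.range Qᵀ.mulVecLin = ⊤)
    (P : Matrix (Fin n₃) (Fin n₃) ℝ)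
    (hP : ∀ v : Fin n₃ → ℝ, v ≠ 0 → 0 < v ⬝ᵥ P.mulVec v)
    (B₁ : Matrix (Fin a) (Fin n₁) ℝ) (hB₁ : B₁ = Matrix.of fun i j => B i (Sum.inl j))
    (B₃ : Matrix (Fin a) (Fin n₃) ℝ)
    (hB₃ : B₃ = Matrix.of fun i j => B i (Sum.inr (Sum.inr j)))
    (Q₂ : Matrix (Fin b) (Fin n₂) ℝ)
    (hQ₂ : Q₂ = Matrix.of fun i j => Q i (Sum.inr (Sum.inl j)))
    (Q₃ : Matrix (Fin b) (Fin n₃) ℝ)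
    (hQ₃ : Q₃ = Matrix.of fun i j => Q i (Sum.inr (Sum.inr j)))
    (K : Matrix (Fin a ⊕ Fin b) (Fin n₁ ⊕ Fin n₂ ⊕ Fin n₃) ℝ)
    (hK : K = Matrix.of (Sum.elim
      (fun i => Sum.elim (fun j => B₁ i j)
        (Sum.elim (fun _ => (0 : ℝ)) (fun j => (B₃ * P) i j)))
      (fun i => Sum.elim (fun _ => (0 : ℝ))
        (Sum.elim (fun j => Q₂ i j) (fun j => Q₃ i j))))) :
    ∀ x : Fin n₁ ⊕ Fin n₂ ⊕ Fin n₃ → ℝ,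
      K.mulVec x = 0 ↔
        (B₁.mulVec (fun j => x (Sum.inl j)) = 0 ∧
         Q₂.mulVec (fun j => x (Sum.inr (Sum.inl j))) = 0 ∧
         ∀ j : Fin n₃, x (Sum.inr (Sum.inr j)) = 0) := by
  -- key orthogonality lemma: kernels of B and Q are orthogonal
  have key : ∀ (y z : Fin n₁ ⊕ Fin n₂ ⊕ Fin n₃ → ℝ),
      B.mulVec y = 0 → Q.mulVec z = 0 → y ⬝ᵥ z = 0 := by
    intro y z hy hz
    have hymem : y ∈ LinearMap.range Bᵀ.mulVecLin ⊔ LinearMap.range Qᵀ.mulVecLin := by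
      rw [hspan]; trivial
    have hzmem : z ∈ LinearMap.range Bᵀ.mulVecLin ⊔ LinearMap.range Qᵀ.mulVecLin := by
      rw [hspan]; trivial
    obtain ⟨p, hp, q, hq, hpq⟩ := Submodule.mem_sup.mp hymem
    obtain ⟨p', hp', q', hq', hpq'⟩ := Submodule.mem_sup.mp hzmem
    obtain ⟨u, rfl⟩ := hp
    obtain ⟨v, rfl⟩ := hq
    obtain ⟨u', rfl⟩ := hp'
    obtain ⟨v', rfl⟩ := hq'
    simp only [Matrix.mulVecLin_apply] at hpq hpq'
    have h1 : Bᵀ.mulVec u' ⬝ᵥ y = 0 := by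
      rw [Matrix.mulVec_transpose, ← Matrix.dotProduct_mulVec, hy, dotProduct_zero]
    have h2 : Qᵀ.mulVec v ⬝ᵥ z = 0 := by
      rw [Matrix.mulVec_transpose, ← Matrix.dotProduct_mulVec, hz, dotProduct_zero]
    have h3 : Qᵀ.mulVec v ⬝ᵥ Qᵀ.mulVec v' = 0 := by
      have := h2
      rw [← hpq', dotProduct_add] at this
      have h4 : Qᵀ.mulVec v ⬝ᵥ Bᵀ.mulVec u' = 0 := by
        rw [dotProduct_comm]; exact horth u' v
      linarith
    have h5 : Bᵀ.mulVec u ⬝ᵥ Bᵀ.mulVec u' = 0 := by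
      have := h1
      rw [← hpq, dotProduct_add] at this
      have h6 : Bᵀ.mulVec u' ⬝ᵥ Qᵀ.mulVec v = 0 := by
        rw [dotProduct_comm]
        have := horth u' v
        rwa [dotProduct_comm] at this
      have h7 : Bᵀ.mulVec u' ⬝ᵥ Bᵀ.mulVec u = 0 := by linarith
      rw [dotProduct_comm]; exact h7
    calc y ⬝ᵥ z = (Bᵀ.mulVec u + Qᵀ.mulVec v) ⬝ᵥ (Bᵀ.mulVec u' + Qᵀ.mulVec v') := by
          rw [hpq, hpq']
      _ = Bᵀ.mulVec u ⬝ᵥ Bᵀ.mulVec u' + Bᵀ.mulVec u ⬝ᵥ Qᵀ.mulVec v'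
          + (Qᵀ.mulVec v ⬝ᵥ Bᵀ.mulVec u' + Qᵀ.mulVec v ⬝ᵥ Qᵀ.mulVec v') := by
          rw [add_dotProduct, dotProduct_add, dotProduct_add]
      _ = 0 := by
          have h8 : Qᵀ.mulVec v ⬝ᵥ Bᵀ.mulVec u' = 0 := by
            rw [dotProduct_comm]; exact horth u' v
          rw [h5, horth u v', h8, h3]; ring
  intro x
  set x₁ : Fin n₁ → ℝ := fun j => x (Sum.inl j) with hx₁
  set x₂ : Fin n₂ → ℝ := fun j => x (Sum.inr (Sum.inl j)) with hx₂
  set x₃ : Fin n₃ → ℝ := fun j => x (Sum.inr (Sum.inr j)) with hx₃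
  -- decompose K.mulVec x
  have hKa : ∀ i : Fin a, K.mulVec x (Sum.inl i)
      = B₁.mulVec x₁ i + B₃.mulVec (P.mulVec x₃) i := by
    intro i
    rw [Matrix.mulVec_mulVec]
    simp [hK, Matrix.mulVec, dotProduct, Fintype.sum_sum_type, hx₁, hx₃]
  have hKb : ∀ i : Fin b, K.mulVec x (Sum.inr i)
      = Q₂.mulVec x₂ i + Q₃.mulVec x₃ i := by
    intro i
    simp [hK, Matrix.mulVec, dotProduct, Fintype.sum_sum_type, hx₂, hx₃]
  constructor
  · intro h
    have ha : ∀ i, B₁.mulVec x₁ i + B₃.mulVec (P.mulVec x₃) i = 0 := by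
      intro i; rw [← hKa i, h]; rfl
    have hb : ∀ i, Q₂.mulVec x₂ i + Q₃.mulVec x₃ i = 0 := by
      intro i; rw [← hKb i, h]; rfl
    -- build kernel vectors
    set y : Fin n₁ ⊕ Fin n₂ ⊕ Fin n₃ → ℝ :=
      Sum.elim x₁ (Sum.elim (fun _ => 0) (P.mulVec x₃)) with hy
    set z : Fin n₁ ⊕ Fin n₂ ⊕ Fin n₃ → ℝ :=
      Sum.elim (fun _ => 0) (Sum.elim x₂ x₃) with hz
    have hBy : B.mulVec y = 0 := by
      funext i
      have : B.mulVec y i = B₁.mulVec x₁ i + B₃.mulVec (P.mulVec x₃) i := by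
        simp [hy, hB₁, hB₃, Matrix.mulVec, dotProduct, Fintype.sum_sum_type]
      rw [this, ha i]; rfl
    have hQz : Q.mulVec z = 0 := by
      funext i
      have : Q.mulVec z i = Q₂.mulVec x₂ i + Q₃.mulVec x₃ i := by
        simp [hz, hQ₂, hQ₃, Matrix.mulVec, dotProduct, Fintype.sum_sum_type]
      rw [this, hb i]; rfl
    have hdot : y ⬝ᵥ z = x₃ ⬝ᵥ P.mulVec x₃ := by
      simp [hy, hz, dotProduct, Fintype.sum_sum_type, mul_comm]
    have hx₃0 : x₃ = 0 := by
      by_contra hne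
      have := hP x₃ hne
      rw [← hdot, key y z hBy hQz] at this
      exact lt_irrefl 0 this
    have hPx₃ : P.mulVec x₃ = 0 := by rw [hx₃0, Matrix.mulVec_zero]
    refine ⟨?_, ?_, fun j => congrFun hx₃0 j⟩
    · funext i
      have := ha i
      rw [hPx₃, Matrix.mulVec_zero] at this
      simpa using this
    · funext i
      have := hb i
      rw [hx₃0, Matrix.mulVec_zero] at this
      simpa using this
  · rintro ⟨h1, h2, h3⟩
    have hx₃0 : x₃ = 0 := funext h3
    funext i
    cases i with
    | inl i =>
      rw [hKa i, hx₃0, Matrix.mulVec_zero, Matrix.mulVec_zero, h1]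
      simp
    | inr i =>
      rw [hKb i, hx₃0, Matrix.mulVec_zero, h2]
      simp
end
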